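/- Let λ/μ be a skew shape of length r with flagging f/g, and let 2 ≤ k ≤ r satisfy g_{k−1} = g_k and μ_{k−1} = μ_k. Let g' be obtained from g by replacing g_k with g_k + 1. Then G̃_{λ/μ,f/g} = G̃_{λ/μ,f/g'}. -/

import Mathlib

/- Common setup: `R = ℤ[β][[x₀,x₁,x₂,…]]` with `β = Polynomial.X`; only the
variables `x i` for `i ≥ 1` are used in the statements. -/

attribute [local instance] Classical.propDecidable

noncomputable section

abbrev A : Type := Polynomial ℤ
abbrev R : Type := MvPowerSeries ℕ A

/-- the element β -/
def bR : R := MvPowerSeries.C (σ := ℕ) (R := A) Polynomial.X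

/-- the variable `x i` -/
def Xv (i : ℕ) : R := MvPowerSeries.X i

/-- total degree of a monomial -/
def degSum (d : ℕ →₀ ℕ) : ℕ := d.sum fun _ n => n

/-- the ring automorphism `s i` exchanging `x i` and `x (i+1)` -/
def sOp (i : ℕ) (f : R) : R := fun d => f (Finsupp.equivMapDomain (Equiv.swap i (i+1)) d)

/-- the divided difference operator `π i`, characterized by
`(x i - x (i+1)) * π i f = (1 + β x (i+1)) f - (1 + β x i) (s i f)`. -/
def ddiff (i : ℕ) (f : R) : R :=
  Classical.epsilon fun gq : R =>
    (Xv i - Xv (i+1)) * gq = (1 + bR * Xv (i+1)) * f - (1 + bR * Xv i) * sOp i f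

/-- complete homogeneous symmetric function of degree `j` in the variables `x_q, …, x_p` -/
def hsym (q p : ℕ) (j : ℤ) : R := fun d =>
  if (∀ k ∈ d.support, q ≤ k ∧ k ≤ p) ∧ (degSum d : ℤ) = j then 1 else 0

/-- `∏_{i=q}^{p} (1 + β x_i)` -/
def prodOneAdd (q p : ℕ) : R := ∏ i ∈ Finset.Icc q p, (1 + bR * Xv i)

/-- `G_m^{[p/q]} = Σ_{s≥0} (−β)^s (∏_{i=q}^p (1+βx_i)) h_{m+s}(x_q,…,x_p)`,
defined coefficientwise (only the terms with `m + s ≤ deg d` can contribute to the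
coefficient at a monomial `d`). -/
def Gsk (p q : ℕ) (m : ℤ) : R := fun d =>
  ∑ s ∈ Finset.range (((degSum d : ℤ) - m).toNat + 1),
    (-Polynomial.X : A) ^ s * MvPowerSeries.coeff (R := A) d (prodOneAdd q p * hsym q p (m + s))

/-- `G_m^{[p]} = G_m^{[p/1]}` -/
def Gk (p : ℕ) (m : ℤ) : R := Gsk p 1 m

/-- the geometric series `Σ_{s≥0} (−β x_i)^s = 1/(1+βx_i)` -/
def geom (i : ℕ) : R := fun d =>
  if d.support ⊆ {i} then (-Polynomial.X : A) ^ (d i) else 0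

/-- substitution of `x₁ = 0` -/
def setX1Zero (f : R) : R := fun d => if d 1 = 0 then f d else 0

/-- generalized binomial coefficient `C(c,s) = c(c−1)⋯(c−s+1)/s!` for `c : ℤ` -/
def intChoose (c : ℤ) (s : ℕ) : ℤ :=
  if 0 ≤ c then (c.toNat.choose s : ℤ) else (-1) ^ s * (((s : ℤ) - 1 - c).toNat.choose s : ℤ)

/-- `Σ_{s≥0} C(c,s) β^s G_{m+s}^{[p/q]}`, defined coefficientwise. -/
def JT (p q : ℕ) (c m : ℤ) : R := fun d =>
  ∑ s ∈ Finset.range (((degSum d : ℤ) - m).toNat + 1),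
    ((intChoose c s : ℤ) : A) * Polynomial.X ^ s * MvPowerSeries.coeff (R := A) d (Gsk p q (m + s))

/-- the Jacobi–Trudi type determinant `G̃_{λ/μ,f/g}` (rows and columns indexed by
`Fin r`, with `i : Fin r` representing the 1-based index `i+1`). -/
def GtildeSkew (r : ℕ) (lam mu f g : Fin r → ℕ) : R :=
  Matrix.det (Matrix.of fun i j : Fin r =>
    JT (f i) (g j) ((i : ℤ) - (j : ℤ))
      ((lam i : ℤ) - (mu j : ℤ) + (j : ℤ) - (i : ℤ)))

/-- the Jacobi–Trudi type determinant `G̃_{λ,f}` -/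
def Gtilde (r : ℕ) (lam f : Fin r → ℕ) : R :=
  GtildeSkew r lam (fun _ => 0) f (fun _ => 1)

/-- flagged skew set-valued tableaux of shape `λ/μ` with flagging `f/g`:
a tableau assigns to the box in row `i` (1-based index `i+1`), column `j`
(with `μᵢ < j ≤ λᵢ`) a nonempty subset of `{gᵢ,…,fᵢ}`, weakly increasing
along rows and strictly increasing along columns; boxes outside the shape
carry `∅`. -/
def IsFSVT (r : ℕ) (lam mu f g : Fin r → ℕ) (T : Fin r × ℕ → Finset ℕ) : Prop :=
  (∀ (i : Fin r) (j : ℕ), ¬ (mu i < j ∧ j ≤ lam i) → T (i, j) = ∅) ∧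
  (∀ (i : Fin r) (j : ℕ), mu i < j → j ≤ lam i → (T (i, j)).Nonempty) ∧
  (∀ (i : Fin r) (j k : ℕ), k ∈ T (i, j) → g i ≤ k ∧ k ≤ f i) ∧
  (∀ (i : Fin r) (j : ℕ), mu i < j → j + 1 ≤ lam i →
     ∀ a ∈ T (i, j), ∀ b ∈ T (i, j + 1), a ≤ b) ∧
  (∀ (i : Fin r) (h : (i : ℕ) + 1 < r) (j : ℕ),
     mu i < j → j ≤ lam i → mu ⟨(i : ℕ) + 1, h⟩ < j → j ≤ lam ⟨(i : ℕ) + 1, h⟩ →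
     ∀ a ∈ T (i, j), ∀ b ∈ T (⟨(i : ℕ) + 1, h⟩, j), a < b)

/-- the total number `|T|` of entries of a tableau -/
def entriesCount (r : ℕ) (lam mu : Fin r → ℕ) (T : Fin r × ℕ → Finset ℕ) : ℕ :=
  ∑ i : Fin r, ∑ j ∈ Finset.Ioc (mu i) (lam i), (T (i, j)).card

/-- `|λ/μ|` -/
def shapeSize (r : ℕ) (lam mu : Fin r → ℕ) : ℕ := ∑ i : Fin r, (lam i - mu i)

/-- the weight `β^{|T|−|λ/μ|} ∏_{k∈T} x_k` of a tableau -/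
def wt (r : ℕ) (lam mu : Fin r → ℕ) (T : Fin r × ℕ → Finset ℕ) : R :=
  bR ^ (entriesCount r lam mu T - shapeSize r lam mu) *
    ∏ i : Fin r, ∏ j ∈ Finset.Ioc (mu i) (lam i), ∏ k ∈ T (i, j), Xv k

/-- the flagged skew Grothendieck polynomial `G_{λ/μ,f/g}` as the (finite) sum of
the weights of all flagged skew set-valued tableaux -/
def GF (r : ℕ) (lam mu f g : Fin r → ℕ) : R :=
  ∑ᶠ (T : Fin r × ℕ → Finset ℕ) (_ : IsFSVT r lam mu f g T), wt r lam mu T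

/- permutations: `w ∈ S_n` is encoded as a permutation of `ℕ` fixing `0` and
everything `> n`. -/

/-- `w` belongs to `S_n` -/
def isSn (n : ℕ) (w : Equiv.Perm ℕ) : Prop := ∀ k, k = 0 ∨ n < k → w k = k

/-- Coxeter length = number of inversions -/
def len (n : ℕ) (w : Equiv.Perm ℕ) : ℕ :=
  (((Finset.Icc 1 n) ×ˢ (Finset.Icc 1 n)).filter fun pr : ℕ × ℕ =>
    pr.1 < pr.2 ∧ w pr.2 < w pr.1).card

/-- the rank function `r_w(p,q) = #{i ≤ p : w(i) ≤ q}` -/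
def rankf (w : Equiv.Perm ℕ) (p q : ℕ) : ℕ :=
  ((Finset.Icc 1 p).filter fun i => w i ≤ q).card

/-- the diagram `D(w)` -/
def inD (n : ℕ) (w : Equiv.Perm ℕ) (p q : ℕ) : Prop :=
  1 ≤ p ∧ p ≤ n ∧ 1 ≤ q ∧ q ≤ n ∧ q < w p ∧ p < w.symm q

/-- the essential set `Ess(w)` -/
def inEss (n : ℕ) (w : Equiv.Perm ℕ) (p q : ℕ) : Prop :=
  inD n w p q ∧ ¬ inD n w (p+1) q ∧ ¬ inD n w p (q+1)

/-- `w ∈ S_n` is vexillary: it avoids the pattern 2143 -/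
def Vexillary (n : ℕ) (w : Equiv.Perm ℕ) : Prop :=
  ¬ ∃ a b c d : ℕ, 1 ≤ a ∧ a < b ∧ b < c ∧ c < d ∧ d ≤ n ∧
      w b < w a ∧ w a < w d ∧ w d < w c

/-!
Every entry of `G̃` is a binomial transform `Σ_s C(c,s) β^s a_{m+s}` of the sequence
`a_j = G_j^{[p/q]}`, which is itself the transform with `c = -1` of `∏_{i=q}^p (1+βx_i) h_j`.
Pascal's rule for these transforms and `h_j(x_q..) = h_j(x_{q+1}..) + x_q h_{j-1}(x_q..)` give
`(1+βx_q)·(column k with flag q+1) = (1+βx_q)·(column k) - x_q·(column k-1) + (defect)`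
whenever `g_{k-1} = g_k = q` and `μ_{k-1} = μ_k`, the defect living only in rows with `f_i < q`.
By multilinearity, and since `1+βx_q` is a unit, it remains to see that the determinant with the
defect in column `k` vanishes. Either the defect column is zero, or it is supported in row `k-1`
with `λ_{k-1} = μ_{k-1}`, and then rows `≥ k` only meet columns `> k`. In the remaining case a row
`i ≥ k` with `f_i < g_k` meets the shape, and both determinants vanish: along the maximal run of
overlapping rows through `i` the flags are monotone, which again yields a zero block too large
for the determinant to survive.
-/

theorem degSum_eq_degree (d : ℕ →₀ ℕ) : degSum d = d.degree := rfl

theorem degSum_mono {d d' : ℕ →₀ ℕ} (h : d' ≤ d) : degSum d' ≤ degSum d :=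
  Finsupp.degree_mono h

theorem coeff_Xv_mul (q : ℕ) (u : R) (d : ℕ →₀ ℕ) :
    MvPowerSeries.coeff d (Xv q * u) =
      if Finsupp.single q 1 ≤ d then MvPowerSeries.coeff (d - Finsupp.single q 1) u else 0 := by
  rw [Xv, MvPowerSeries.X, MvPowerSeries.coeff_monomial_mul]
  split_ifs <;> simp

theorem coeff_bR_mul (u : R) (d : ℕ →₀ ℕ) :
    MvPowerSeries.coeff d (bR * u) = Polynomial.X * MvPowerSeries.coeff d u :=
  MvPowerSeries.coeff_C_mul _ _ _

theorem isUnit_one_add_bR_mul_Xv (q : ℕ) : IsUnit (1 + bR * Xv q) := by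
  rw [MvPowerSeries.isUnit_iff_constantCoeff, map_add, map_one, map_mul, Xv,
    MvPowerSeries.constantCoeff_X, mul_zero, add_zero]
  exact isUnit_one

theorem intChoose_eq_choose (c : ℤ) (s : ℕ) : intChoose c s = Ring.choose c s := by
  unfold intChoose
  split_ifs with hc
  · rw [← Ring.choose_natCast, Int.toNat_of_nonneg hc]
  · rw [← neg_neg c, Ring.choose_neg, neg_neg,
      show -c + s - 1 = (((s : ℤ) - 1 - c).toNat : ℤ) by omega, Ring.choose_natCast,
      Units.smul_def, smul_eq_mul, Int.coe_negOnePow_natCast]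

theorem intChoose_succ_succ (c : ℤ) (s : ℕ) :
    intChoose (c + 1) (s + 1) = intChoose c s + intChoose c (s + 1) := by
  simp only [intChoose_eq_choose, Ring.choose_succ_succ]

theorem intChoose_zero_left (s : ℕ) : intChoose 0 s = if s = 0 then 1 else 0 := by
  cases s <;> simp [intChoose]

theorem intChoose_neg_one (s : ℕ) : intChoose (-1) s = (-1) ^ s := by
  simp [intChoose]

theorem intChoose_zero_right (c : ℤ) : intChoose c 0 = 1 := by
  simp [intChoose_eq_choose]

def HasOrderGe (a : ℤ → R) : Prop :=
  ∀ j (d : ℕ →₀ ℕ), (degSum d : ℤ) < j → MvPowerSeries.coeff d (a j) = 0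

namespace HasOrderGe

variable {a : ℤ → R}

theorem mul_left (ha : HasOrderGe a) (u : R) : HasOrderGe fun j => u * a j := by
  classical
  intro j d hd
  rw [MvPowerSeries.coeff_mul]
  refine Finset.sum_eq_zero fun x hx => ?_
  have := degSum_mono ((Finset.HasAntidiagonal.mem_antidiagonal.mp hx) ▸ le_add_self : x.2 ≤ d)
  rw [ha j x.2 (by omega), mul_zero]

theorem Xv_mul_sub_one (ha : HasOrderGe a) (q : ℕ) : HasOrderGe fun j => Xv q * a (j - 1) := by
  intro j d hd
  rw [coeff_Xv_mul]
  split_ifs with hq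
  · refine ha _ _ ?_
    have := congrArg Finsupp.degree (tsub_add_cancel_of_le hq)
    rw [map_add, Finsupp.degree_single] at this
    rw [degSum_eq_degree] at hd ⊢
    omega
  · rfl

end HasOrderGe

theorem hasOrderGe_hsym (q p : ℕ) : HasOrderGe (hsym q p) := fun _ _ hd =>
  if_neg fun h => hd.ne h.2

/-- `binomTrans c a m = Σ_{s ≥ 0} C(c,s) β^s a (m+s)`, truncated coefficientwise exactly as
`JT`, so that `JT p q c = binomTrans c (Gsk p q)`; it is the intended series when every `a j`
only has monomials of degree `≥ j` (`HasOrderGe a`). -/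
def binomTrans (c : ℤ) (a : ℤ → R) (m : ℤ) : R := fun d =>
  ∑ s ∈ Finset.range (((degSum d : ℤ) - m).toNat + 1),
    ((intChoose c s : ℤ) : A) * Polynomial.X ^ s * MvPowerSeries.coeff d (a (m + s))

theorem coeff_binomTrans (c : ℤ) (a : ℤ → R) (m : ℤ) (d : ℕ →₀ ℕ) :
    MvPowerSeries.coeff d (binomTrans c a m) = ∑ s ∈ Finset.range (((degSum d : ℤ) - m).toNat + 1),
      ((intChoose c s : ℤ) : A) * Polynomial.X ^ s * MvPowerSeries.coeff d (a (m + s)) := rfl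

section binomTrans

variable {a b : ℤ → R}

theorem coeff_binomTrans_eq_sum (ha : HasOrderGe a) (c m : ℤ) {N : ℕ}
    {d : ℕ →₀ ℕ} (hN : (degSum d : ℤ) - m < N) :
    MvPowerSeries.coeff d (binomTrans c a m) = ∑ s ∈ Finset.range N,
      ((intChoose c s : ℤ) : A) * Polynomial.X ^ s * MvPowerSeries.coeff d (a (m + s)) := by
  have hvan : ∀ s : ℕ, (degSum d : ℤ) - m < s →
      ((intChoose c s : ℤ) : A) * Polynomial.X ^ s * MvPowerSeries.coeff d (a (m + s)) = 0 :=
    fun s hs => by rw [ha _ _ (by omega), mul_zero]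
  rcases le_total N (((degSum d : ℤ) - m).toNat + 1) with h | h
  · exact (Finset.sum_subset (Finset.range_subset_range.2 h)
      fun s _ hs => hvan s (by simp at hs; omega)).symm
  · exact Finset.sum_subset (Finset.range_subset_range.2 h)
      fun s _ hs => hvan s (by simp at hs; omega)

theorem HasOrderGe.binomTrans (ha : HasOrderGe a) (c : ℤ) : HasOrderGe (binomTrans c a) :=
  fun j _ hd => by rw [coeff_binomTrans_eq_sum ha c j (N := 0) (by omega), Finset.sum_range_zero]

theorem binomTrans_add (c m : ℤ) :
    binomTrans c (fun j => a j + b j) m = binomTrans c a m + binomTrans c b m :=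
  MvPowerSeries.ext fun d => by
    simp only [coeff_binomTrans, map_add, mul_add, Finset.sum_add_distrib]

theorem binomTrans_sub (c m : ℤ) :
    binomTrans c (fun j => a j - b j) m = binomTrans c a m - binomTrans c b m :=
  MvPowerSeries.ext fun d => by
    simp only [coeff_binomTrans, map_sub, mul_sub, Finset.sum_sub_distrib]

theorem binomTrans_zero_left (a : ℤ → R) (m : ℤ) : binomTrans 0 a m = a m :=
  MvPowerSeries.ext fun d => by
    rw [coeff_binomTrans, Finset.sum_eq_single_of_mem 0 (by simp)
      fun s _ hs => by rw [intChoose_zero_left, if_neg hs, Int.cast_zero, zero_mul, zero_mul]]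
    simp [intChoose_zero_left]

theorem binomTrans_eq_zero_of_forall {c m : ℤ} (h : ∀ j, m ≤ j → a j = 0) :
    binomTrans c a m = 0 :=
  MvPowerSeries.ext fun d => by
    rw [coeff_binomTrans, map_zero]
    exact Finset.sum_eq_zero fun s _ => by rw [h _ (by omega), map_zero, mul_zero]

theorem mul_binomTrans (ha : HasOrderGe a) (u : R) (c m : ℤ) :
    u * binomTrans c a m = binomTrans c (fun j => u * a j) m := by
  classical
  refine MvPowerSeries.ext fun d => ?_
  have hsum : ∀ x : (ℕ →₀ ℕ) × (ℕ →₀ ℕ), x.1 + x.2 = d →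
      MvPowerSeries.coeff x.2 (binomTrans c a m) =
        ∑ s ∈ Finset.range (((degSum d : ℤ) - m).toNat + 1), ((intChoose c s : ℤ) : A) *
          Polynomial.X ^ s * MvPowerSeries.coeff x.2 (a (m + s)) := fun x hx => by
    have := degSum_mono (hx ▸ le_add_self : x.2 ≤ d)
    exact coeff_binomTrans_eq_sum ha c m (by omega)
  rw [MvPowerSeries.coeff_mul, Finset.sum_congr rfl fun x hx =>
    by rw [hsum x (Finset.HasAntidiagonal.mem_antidiagonal.mp hx)]]
  simp only [coeff_binomTrans, MvPowerSeries.coeff_mul, Finset.mul_sum]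
  rw [Finset.sum_comm]
  exact Finset.sum_congr rfl fun s _ => Finset.sum_congr rfl fun x _ => by ring

theorem binomTrans_Xv_mul_sub_one (ha : HasOrderGe a) (q : ℕ) (c m : ℤ) :
    binomTrans c (fun j => Xv q * a (j - 1)) m = Xv q * binomTrans c a (m - 1) := by
  rw [mul_binomTrans ha]
  refine MvPowerSeries.ext fun d => ?_
  rw [coeff_binomTrans_eq_sum (ha.Xv_mul_sub_one q) c m
    (N := ((degSum d : ℤ) - (m - 1)).toNat + 1) (by omega), coeff_binomTrans]
  exact Finset.sum_congr rfl fun s _ => by rw [sub_add_eq_add_sub]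

theorem binomTrans_succ_left (ha : HasOrderGe a) (c m : ℤ) :
    binomTrans (c + 1) a m = binomTrans c a m + bR * binomTrans c a (m + 1) :=
  MvPowerSeries.ext fun d => by
    rw [map_add, coeff_bR_mul, coeff_binomTrans_eq_sum ha c (m + 1)
      (N := ((degSum d : ℤ) - m).toNat) (by omega), coeff_binomTrans, coeff_binomTrans,
      Finset.sum_range_succ', Finset.sum_range_succ', Finset.mul_sum, add_right_comm,
      ← Finset.sum_add_distrib]
    congr 1
    · refine Finset.sum_congr rfl fun s _ => ?_
      rw [intChoose_succ_succ, show m + ((s + 1 : ℕ) : ℤ) = m + 1 + s by push_cast; ring]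
      push_cast
      ring
    · simp [intChoose_zero_right]

theorem binomTrans_eq_zero_of_add_nonpos (ha : HasOrderGe a) {c₀ : ℤ}
    (h₀ : ∀ m, m + c₀ ≤ 0 → binomTrans c₀ a m = 0) {c m : ℤ} (hc : c₀ ≤ c) (hm : m + c ≤ 0) :
    binomTrans c a m = 0 := by
  induction c, hc using Int.leInduction generalizing m with
  | base => exact h₀ m hm
  | succ c _ ih => rw [binomTrans_succ_left ha, ih (by omega), ih (by omega), mul_zero, add_zero]

theorem binomTrans_recursion {a' e : ℤ → R} (ha' : HasOrderGe a') (ha : HasOrderGe a)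
    (u : R) (q : ℕ) (h : ∀ j, u * a' j = a j - Xv q * a (j - 1) + e j) (c m : ℤ) :
    u * binomTrans c a' m =
      binomTrans c a m - Xv q * binomTrans c a (m - 1) + binomTrans c e m := by
  rw [mul_binomTrans ha', funext h, binomTrans_add, binomTrans_sub,
    binomTrans_Xv_mul_sub_one ha]

end binomTrans

theorem hasOrderGe_single_zero : HasOrderGe (Pi.single 0 1) := fun j _ hd => by
  rw [Pi.single_apply, if_neg (by omega), map_zero]

theorem coeff_hsym (q p : ℕ) (j : ℤ) (d : ℕ →₀ ℕ) :
    MvPowerSeries.coeff d (hsym q p j) =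
      if (∀ k, (k < q ∨ p < k) → d k = 0) ∧ (degSum d : ℤ) = j then 1 else 0 := by
  refine if_congr (and_congr_left' ⟨fun h k hk => by_contra fun h' => ?_, fun h k hk => ?_⟩) rfl rfl
  · have := h k (Finsupp.mem_support_iff.2 h'); omega
  · exact by_contra fun h' => Finsupp.mem_support_iff.1 hk (h k (by omega))

theorem hsym_succ {q p : ℕ} (hqp : q ≤ p) (j : ℤ) :
    hsym q p j = hsym (q + 1) p j + Xv q * hsym q p (j - 1) := by
  refine MvPowerSeries.ext fun d => ?_
  rw [map_add, coeff_Xv_mul, coeff_hsym, coeff_hsym]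
  by_cases hq : Finsupp.single q 1 ≤ d
  · have hdq : 1 ≤ d q := by simpa using Finsupp.single_le_iff.mp hq
    have hdeg := congrArg degSum (tsub_add_cancel_of_le hq)
    rw [degSum_eq_degree, degSum_eq_degree, map_add, Finsupp.degree_single] at hdeg
    have hout : ∀ k, (k < q ∨ p < k) → (d - Finsupp.single q 1 : ℕ →₀ ℕ) k = d k := fun k hk => by
      rw [Finsupp.tsub_apply, Finsupp.single_apply, if_neg (by omega), Nat.sub_zero]
    have hnot : ¬ ((∀ k, (k < q + 1 ∨ p < k) → d k = 0) ∧ (degSum d : ℤ) = j) :=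
      fun h => by have := h.1 q (by omega); omega
    rw [if_pos hq, coeff_hsym, if_neg hnot, zero_add]
    refine if_congr (and_congr ⟨fun h k hk => ?_, fun h k hk => ?_⟩ ?_) rfl rfl
    · rw [hout k hk, h k hk]
    · rw [← hout k hk, h k hk]
    · rw [degSum_eq_degree, degSum_eq_degree]; omega
  · have hdq : d q = 0 := by
      by_contra h
      exact hq (Finsupp.single_le_iff.mpr (by omega))
    rw [if_neg hq, add_zero]
    refine if_congr (and_congr_left' ⟨fun h k hk => ?_, fun h k hk => h k (by omega)⟩) rfl rfl
    rcases eq_or_ne k q with rfl | hkq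
    · exact hdq
    · exact h k (by omega)

theorem hsym_of_lt {q p : ℕ} (hpq : p < q) : hsym q p = Pi.single 0 1 := by
  funext j
  refine MvPowerSeries.ext fun d => ?_
  have hd : (∀ k, (k < q ∨ p < k) → d k = 0) ↔ d = 0 :=
    ⟨fun h => Finsupp.ext fun k => h k (by omega), fun h k _ => by simp [h]⟩
  rw [coeff_hsym, Pi.single_apply]
  simp only [hd]
  by_cases hd0 : d = 0
  · subst hd0
    by_cases hj : j = 0 <;> simp [hj, degSum, eq_comm (a := (0 : ℤ))]
  · split_ifs <;> simp_all [MvPowerSeries.coeff_one]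

theorem hsym_eq_zero_of_neg (q p : ℕ) {j : ℤ} (hj : j < 0) : hsym q p j = 0 :=
  MvPowerSeries.ext fun _ => if_neg fun h => by omega

theorem prodOneAdd_of_lt {q p : ℕ} (hpq : p < q) : prodOneAdd q p = 1 := by
  rw [prodOneAdd, Finset.Icc_eq_empty (by omega), Finset.prod_empty]

theorem prodOneAdd_succ {q p : ℕ} (hqp : q ≤ p) :
    prodOneAdd q p = (1 + bR * Xv q) * prodOneAdd (q + 1) p := by
  rw [prodOneAdd, Finset.Icc_eq_cons_Ioc hqp, Finset.prod_cons, ← Finset.Icc_add_one_left_eq_Ioc,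
    prodOneAdd]

theorem coeff_Gsk (p q : ℕ) (m : ℤ) (d : ℕ →₀ ℕ) :
    MvPowerSeries.coeff d (Gsk p q m) = ∑ s ∈ Finset.range (((degSum d : ℤ) - m).toNat + 1),
      (-Polynomial.X : A) ^ s * MvPowerSeries.coeff d (prodOneAdd q p * hsym q p (m + s)) := rfl

theorem Gsk_eq_binomTrans (p q : ℕ) :
    Gsk p q = binomTrans (-1) fun j => prodOneAdd q p * hsym q p j := by
  funext m
  refine MvPowerSeries.ext fun d => ?_
  rw [coeff_Gsk, coeff_binomTrans]
  exact Finset.sum_congr rfl fun s _ => by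
    rw [intChoose_neg_one, neg_pow, Int.cast_pow, Int.cast_neg, Int.cast_one]

theorem hasOrderGe_Gsk (p q : ℕ) : HasOrderGe (Gsk p q) :=
  Gsk_eq_binomTrans p q ▸ ((hasOrderGe_hsym q p).mul_left _).binomTrans _

theorem Gsk_add_bR_mul (p q : ℕ) (m : ℤ) :
    Gsk p q m + bR * Gsk p q (m + 1) = prodOneAdd q p * hsym q p m := by
  have h := binomTrans_succ_left ((hasOrderGe_hsym q p).mul_left (prodOneAdd q p)) (-1) m
  rw [neg_add_cancel, binomTrans_zero_left] at h
  rw [h, Gsk_eq_binomTrans]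

theorem Gsk_of_lt {p q : ℕ} (hpq : p < q) : Gsk p q = binomTrans (-1) (Pi.single 0 1) := by
  simp only [Gsk_eq_binomTrans, prodOneAdd_of_lt hpq, hsym_of_lt hpq, one_mul]

theorem Gsk_eq_zero_of_lt {p q : ℕ} (hpq : p < q) {m : ℤ} (hm : 0 < m) : Gsk p q m = 0 := by
  rw [Gsk_of_lt hpq]
  exact binomTrans_eq_zero_of_forall fun j hj => Pi.single_eq_of_ne (by omega) _

/-- For `p < q` the series `G^{[p/q]}` no longer depends on `q`, and `Gsk_succ` needs this
correction. -/
def flagDefect (p q : ℕ) (j : ℤ) : R :=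
  if p < q then Xv q * (Pi.single 0 1 : ℤ → R) (j - 1) else 0

theorem hasOrderGe_flagDefect (p q : ℕ) : HasOrderGe (flagDefect p q) := by
  unfold flagDefect
  split_ifs
  · exact hasOrderGe_single_zero.Xv_mul_sub_one q
  · exact fun _ _ _ => map_zero _

theorem Gsk_succ (p q : ℕ) (m : ℤ) :
    (1 + bR * Xv q) * Gsk p (q + 1) m = Gsk p q m - Xv q * Gsk p q (m - 1) + flagDefect p q m := by
  rcases le_or_gt q p with hqp | hpq
  · have h := binomTrans_recursion ((hasOrderGe_hsym (q + 1) p).mul_left (prodOneAdd (q + 1) p))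
      ((hasOrderGe_hsym q p).mul_left (prodOneAdd q p)) (1 + bR * Xv q) q (e := 0)
      (fun j => by rw [prodOneAdd_succ hqp, hsym_succ hqp j, Pi.zero_apply]; ring) (-1) m
    rw [binomTrans_eq_zero_of_forall (a := 0) fun _ _ => rfl, ← Gsk_eq_binomTrans,
      ← Gsk_eq_binomTrans] at h
    rw [h, flagDefect, if_neg (by omega)]
  · have h := Gsk_add_bR_mul p q (m - 1)
    rw [sub_add_cancel, prodOneAdd_of_lt hpq, hsym_of_lt hpq, one_mul] at h
    rw [Gsk_of_lt (by omega : p < q + 1), ← Gsk_of_lt hpq, flagDefect, if_pos hpq, ← h]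
    ring

theorem JT_eq_binomTrans (p q : ℕ) (c : ℤ) : JT p q c = binomTrans c (Gsk p q) := rfl

theorem JT_succ (p q : ℕ) (c m : ℤ) :
    (1 + bR * Xv q) * JT p (q + 1) c m = (1 + bR * Xv q) * JT p q c m
      - Xv q * JT p q (c + 1) (m - 1) + binomTrans c (flagDefect p q) m := by
  have hG := hasOrderGe_Gsk p q
  simp only [JT_eq_binomTrans]
  rw [binomTrans_recursion (hasOrderGe_Gsk p (q + 1)) hG _ q (Gsk_succ p q) c m,
    binomTrans_succ_left hG c (m - 1), sub_add_cancel]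
  ring

theorem JT_eq_zero_of_add_nonpos (p q : ℕ) {c m : ℤ} (hc : 1 ≤ c) (hm : m + c ≤ 0) :
    JT p q c m = 0 := by
  refine binomTrans_eq_zero_of_add_nonpos (hasOrderGe_Gsk p q) (fun m hm => ?_) hc hm
  rw [← zero_add 1, binomTrans_succ_left (hasOrderGe_Gsk p q), binomTrans_zero_left,
    binomTrans_zero_left, Gsk_add_bR_mul, hsym_eq_zero_of_neg q p (by omega), mul_zero]

theorem JT_eq_zero_of_lt {p q : ℕ} (hpq : p < q) (c : ℤ) {m : ℤ} (hm : 0 < m) : JT p q c m = 0 :=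
  binomTrans_eq_zero_of_forall fun _ hj => Gsk_eq_zero_of_lt hpq (by omega)

section flagDefect

variable {p q : ℕ} {c m : ℤ}

theorem binomTrans_flagDefect_of_le (hqp : q ≤ p) : binomTrans c (flagDefect p q) m = 0 :=
  binomTrans_eq_zero_of_forall fun _ _ => if_neg (by omega)

theorem binomTrans_flagDefect_of_one_lt (hm : 1 < m) : binomTrans c (flagDefect p q) m = 0 :=
  binomTrans_eq_zero_of_forall fun j hj => by
    rw [flagDefect, Pi.single_eq_of_ne (by omega : j - 1 ≠ 0), mul_zero, ite_self]

theorem binomTrans_flagDefect_of_add_nonpos (hc : 0 ≤ c) (hm : m + c ≤ 0) :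
    binomTrans c (flagDefect p q) m = 0 := by
  refine binomTrans_eq_zero_of_add_nonpos (hasOrderGe_flagDefect p q) (fun m hm => ?_) hc hm
  rw [binomTrans_zero_left, flagDefect, Pi.single_eq_of_ne (by omega : m - 1 ≠ 0), mul_zero,
    ite_self]

end flagDefect

section Matrix

variable {n K : Type*} [Fintype n] [DecidableEq n] [CommRing K]

theorem Matrix.det_eq_zero_of_card_lt (M : Matrix n n K) {rows cols : Finset n}
    (hcard : cols.card < rows.card) (h : ∀ t ∈ rows, ∀ j ∉ cols, M t j = 0) : M.det = 0 := by
  rw [Matrix.det_apply]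
  refine Finset.sum_eq_zero fun σ _ => ?_
  obtain ⟨j, hj, hσj⟩ : ∃ j ∉ cols, σ j ∈ rows := by
    by_contra! hcon
    have hsub : rows ⊆ cols.image σ := fun t ht =>
      Finset.mem_image.2 ⟨σ.symm t, by_contra fun h => hcon _ h (by simpa using ht), by simp⟩
    exact (Finset.card_le_card hsub).trans Finset.card_image_le |>.not_gt hcard
  rw [Finset.prod_eq_zero (f := fun i => M (σ i) i) (Finset.mem_univ j) (h _ hσj _ hj), smul_zero]

theorem Matrix.mul_det_updateCol_eq (M : Matrix n n K) {k k' : n} (hk : k' ≠ k) (u w : K)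
    {v e : n → K} (h : ∀ i, u * v i = u * M i k + w * M i k' + e i) :
    u * (M.updateCol k v).det = u * M.det + (M.updateCol k e).det := by
  have hv : u • v = u • (fun i => M i k) + w • (fun i => M i k') + e := funext h
  rw [← Matrix.det_updateCol_smul, hv, Matrix.det_updateCol_add, Matrix.det_updateCol_add,
    Matrix.det_updateCol_smul, Matrix.det_updateCol_smul, Matrix.updateCol_eq_self,
    Matrix.det_updateCol_eq_zero hk, mul_zero, add_zero]

end Matrix

theorem exists_chain_down (P : ℕ → Prop) (i : ℕ) :
    ∃ a ≤ i, (∀ u, a ≤ u → u < i → P u) ∧ (0 < a → ¬ P (a - 1)) := by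
  induction i with
  | zero => exact ⟨0, le_rfl, fun u _ hu => absurd hu (by omega), fun h => absurd h (by omega)⟩
  | succ i ih =>
    by_cases hP : P i
    · obtain ⟨a, hai, hchain, hbreak⟩ := ih
      refine ⟨a, by omega, fun u hau hu => ?_, hbreak⟩
      rcases Nat.lt_or_ge u i with h | h
      · exact hchain u hau h
      · rwa [show u = i by omega]
    · exact ⟨i + 1, le_rfl, fun u hu h => absurd h (by omega), fun _ => by simpa using hP⟩

theorem exists_chain_up (P : ℕ → Prop) {i r : ℕ} (hi : i < r) :
    ∃ b, i ≤ b ∧ b < r ∧ (∀ u, i ≤ u → u < b → P u) ∧ (b + 1 < r → ¬ P b) := by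
  obtain ⟨n, rfl⟩ : ∃ n, r = i + n + 1 := ⟨r - i - 1, by omega⟩
  induction n generalizing i with
  | zero =>
    exact ⟨i, le_rfl, by omega, fun u hu h => absurd h (by omega), fun h => absurd h (by omega)⟩
  | succ n ih =>
    by_cases hP : P i
    · obtain ⟨b, hib, hbr, hchain, hbreak⟩ := ih (i := i + 1) (by omega)
      refine ⟨b, by omega, by omega, fun u hiu hub => ?_, fun h => hbreak (by omega)⟩
      rcases eq_or_lt_of_le hiu with rfl | h
      · exact hP
      · exact hchain u h hub
    · exact ⟨i, le_rfl, by omega, fun u hu h => absurd h (by omega), fun _ => hP⟩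

theorem le_of_chain {F : ℕ → ℕ} {a b : ℕ} (hab : a ≤ b)
    (h : ∀ u, a ≤ u → u < b → F u ≤ F (u + 1)) : F a ≤ F b := by
  induction b, hab using Nat.le_induction with
  | base => exact le_rfl
  | succ b hab ih => exact (ih fun u h1 h2 => h u h1 (by omega)).trans (h b hab (by omega))

def jtMatrix (r : ℕ) (lam mu f g : Fin r → ℕ) : Matrix (Fin r) (Fin r) R :=
  Matrix.of fun i j : Fin r =>
    JT (f i) (g j) ((i : ℤ) - (j : ℤ)) ((lam i : ℤ) - (mu j : ℤ) + (j : ℤ) - (i : ℤ))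

theorem GtildeSkew_eq_det (r : ℕ) (lam mu f g : Fin r → ℕ) :
    GtildeSkew r lam mu f g = (jtMatrix r lam mu f g).det := rfl

section jtMatrix

variable {r : ℕ} {lam mu f g : Fin r → ℕ}

theorem jtMatrix_apply_eq_zero_of_le {t j : Fin r} (hjt : (j : ℕ) < t) (h : lam t ≤ mu j) :
    jtMatrix r lam mu f g t j = 0 :=
  JT_eq_zero_of_add_nonpos _ _ (by omega) (by omega)

theorem jtMatrix_apply_eq_zero_of_lt {t j : Fin r} (htj : (t : ℕ) ≤ j) (h : mu j < lam t)
    (hfg : f t < g j) : jtMatrix r lam mu f g t j = 0 :=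
  JT_eq_zero_of_lt hfg _ (by omega)

/-- The maximal run `[a, b]` of consecutive overlapping rows through `i`: the flags are monotone
along it, and the shape separates it from the rows above and below. -/
theorem exists_flag_block (hlam_anti : ∀ i j : Fin r, i ≤ j → lam j ≤ lam i)
    (hmu_anti : ∀ i j : Fin r, i ≤ j → mu j ≤ mu i)
    (hflag : ∀ (i : Fin r) (h : (i : ℕ) + 1 < r), mu i < lam ⟨(i : ℕ) + 1, h⟩ →
      g i ≤ g ⟨(i : ℕ) + 1, h⟩ ∧ f i ≤ f ⟨(i : ℕ) + 1, h⟩) (i : Fin r) :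
    ∃ a b : ℕ, a ≤ i ∧ (i : ℕ) ≤ b ∧
      (∀ t s : Fin r, a ≤ (t : ℕ) → t ≤ s → (s : ℕ) ≤ b → f t ≤ f s ∧ g t ≤ g s) ∧
      (∀ t j : Fin r, (j : ℕ) < a → a ≤ (t : ℕ) → lam t ≤ mu j) ∧
      (∀ t j : Fin r, (j : ℕ) ≤ b → b < (t : ℕ) → lam t ≤ mu j) := by
  set ext : (Fin r → ℕ) → ℕ → ℕ := fun v => Function.extend Fin.val v 0
  have hext : ∀ v (u : ℕ) (hu : u < r), ext v u = v ⟨u, hu⟩ :=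
    fun v u hu => Fin.val_injective.extend_apply v 0 ⟨u, hu⟩
  set link : ℕ → Prop := fun u => u + 1 < r ∧ ext mu u < ext lam (u + 1)
  have hstep : ∀ u, link u → ext f u ≤ ext f (u + 1) ∧ ext g u ≤ ext g (u + 1) := by
    rintro u ⟨hu, hlink⟩
    rw [hext mu u (by omega), hext lam _ hu] at hlink
    rw [hext f u (by omega), hext f _ hu, hext g u (by omega), hext g _ hu]
    exact (hflag ⟨u, by omega⟩ hu hlink).symm
  obtain ⟨a, hai, hchain_a, hbreak_a⟩ := exists_chain_down link i
  obtain ⟨b, hib, hbr, hchain_b, hbreak_b⟩ := exists_chain_up link i.isLt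
  refine ⟨a, b, hai, hib, fun t s hat hts hsb => ?_, fun t j hja hat => ?_,
    fun t j hjb hbt => ?_⟩
  · have hlink : ∀ u : ℕ, t ≤ u → u < s → link u := fun u h1 h2 =>
      if hui : u < i then hchain_a u (by omega) hui else hchain_b u (by omega) (by omega)
    have hf := le_of_chain (F := ext f) (a := t) (b := s) hts fun u h1 h2 =>
      (hstep u (hlink u h1 h2)).1
    have hg := le_of_chain (F := ext g) (a := t) (b := s) hts fun u h1 h2 =>
      (hstep u (hlink u h1 h2)).2
    rw [hext f t t.isLt, hext f s s.isLt] at hf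
    rw [hext g t t.isLt, hext g s s.isLt] at hg
    exact ⟨hf, hg⟩
  · have hbrk := hbreak_a (by omega)
    simp only [link, Nat.sub_add_cancel (show 1 ≤ a by omega), not_and, not_lt] at hbrk
    have h := hbrk (by omega)
    rw [hext lam a (by omega), hext mu (a - 1) (by omega)] at h
    exact (hlam_anti ⟨a, by omega⟩ t (Fin.le_iff_val_le_val.2 hat)).trans
      (h.trans (hmu_anti j ⟨a - 1, by omega⟩ (Fin.le_iff_val_le_val.2 (by simp; omega))))
  · have hbrk := hbreak_b (by omega)
    simp only [link, not_and, not_lt] at hbrk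
    have h := hbrk (by omega)
    rw [hext lam (b + 1) (by omega), hext mu b (by omega)] at h
    exact (hlam_anti ⟨b + 1, by omega⟩ t (Fin.le_iff_val_le_val.2 hbt)).trans
      (h.trans (hmu_anti j ⟨b, by omega⟩ (Fin.le_iff_val_le_val.2 hjb)))

theorem det_jtMatrix_eq_zero_of_lt (hlam_anti : ∀ i j : Fin r, i ≤ j → lam j ≤ lam i)
    (hmu_anti : ∀ i j : Fin r, i ≤ j → mu j ≤ mu i)
    (hflag : ∀ (i : Fin r) (h : (i : ℕ) + 1 < r), mu i < lam ⟨(i : ℕ) + 1, h⟩ →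
      g i ≤ g ⟨(i : ℕ) + 1, h⟩ ∧ f i ≤ f ⟨(i : ℕ) + 1, h⟩)
    {G : Fin r → ℕ} (hG : ∀ j, g j ≤ G j) {k i : Fin r} (hki : k ≤ i) (hf : f i < g k)
    (hmu : mu k < lam i) : (jtMatrix r lam mu f G).det = 0 := by
  obtain ⟨a, b, hai, hib, hmono, hlow, hhigh⟩ := exists_flag_block hlam_anti hmu_anti hflag i
  have hak : a ≤ (k : ℕ) := by
    by_contra h
    exact (hlow i k (by omega) hai).not_gt hmu
  refine Matrix.det_eq_zero_of_card_lt _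
    (rows := Finset.univ.filter fun t : Fin r => a ≤ (t : ℕ) ∧ t ≤ i ∨ b < (t : ℕ))
    (cols := Finset.univ.filter fun j : Fin r => a ≤ (j : ℕ) ∧ j < i ∨ b < (j : ℕ))
    (Finset.card_lt_card ((Finset.ssubset_iff_of_subset fun j => ?_).2 ⟨i, ?_⟩)) ?_
  · simp only [Finset.mem_filter, Finset.mem_univ, true_and]
    exact Or.imp_left fun h => ⟨h.1, h.2.le⟩
  · simp [hai, hib]
  · intro t ht j hj
    simp only [Finset.mem_filter, Finset.mem_univ, true_and, not_or, not_and, not_lt] at ht hj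
    rcases ht with ⟨hat, hti⟩ | hbt
    · by_cases hja : (j : ℕ) < a
      · exact jtMatrix_apply_eq_zero_of_le (by omega) (hlow t j hja hat)
      · have hij : i ≤ j := hj.1 (by omega)
        have hjb : (j : ℕ) ≤ b := hj.2
        refine jtMatrix_apply_eq_zero_of_lt (le_trans hti hij) ?_ ?_
        · exact (hmu_anti k j (hki.trans hij)).trans_lt (hmu.trans_le (hlam_anti t i hti))
        · calc f t ≤ f i := (hmono t i hat hti hib).1
            _ < g k := hf
            _ ≤ g j := (hmono k j hak (hki.trans hij) hjb).2
            _ ≤ G j := hG j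
    · exact jtMatrix_apply_eq_zero_of_le (by omega) (hhigh t j hj.2 hbt)

theorem jtMatrix_update (k : Fin r) (n : ℕ) :
    jtMatrix r lam mu f (Function.update g k n) = (jtMatrix r lam mu f g).updateCol k
      fun i => JT (f i) n ((i : ℤ) - (k : ℤ)) ((lam i : ℤ) - (mu k : ℤ) + (k : ℤ) - (i : ℤ)) := by
  ext i j
  rcases eq_or_ne j k with rfl | hjk
  · simp [jtMatrix]
  · simp [jtMatrix, hjk]

def jtDefect (r : ℕ) (lam mu f : Fin r → ℕ) (q : ℕ) (k : Fin r) : Fin r → R := fun i =>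
  binomTrans ((i : ℤ) - (k : ℤ)) (flagDefect (f i) q) ((lam i : ℤ) - (mu k : ℤ) + (k : ℤ) - (i : ℤ))

theorem mul_det_jtMatrix_update {k k' : Fin r} (hk' : (k' : ℕ) + 1 = k) (hg : g k' = g k)
    (hmu : mu k' = mu k) :
    (1 + bR * Xv (g k)) * (jtMatrix r lam mu f (Function.update g k (g k + 1))).det =
      (1 + bR * Xv (g k)) * (jtMatrix r lam mu f g).det +
        ((jtMatrix r lam mu f g).updateCol k (jtDefect r lam mu f (g k) k)).det := by
  rw [jtMatrix_update]
  refine Matrix.mul_det_updateCol_eq _ (k' := k') (fun h => by subst h; omega) _ (-Xv (g k))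
    fun i => ?_
  simp only [jtMatrix, Matrix.of_apply, jtDefect, hg, hmu, JT_succ]
  have hk'z : ((k' : ℕ) : ℤ) = (k : ℤ) - 1 := by omega
  rw [hk'z, show (i : ℤ) - ((k : ℤ) - 1) = (i : ℤ) - k + 1 by ring,
    show (lam i : ℤ) - mu k + ((k : ℤ) - 1) - i = (lam i : ℤ) - mu k + k - i - 1 by ring]
  ring

theorem jtDefect_eq_zero_of_ne (hmu_anti : ∀ i j : Fin r, i ≤ j → mu j ≤ mu i)
    (hmule : ∀ i, mu i ≤ lam i) {q : ℕ} {k k' : Fin r} (hk' : (k' : ℕ) + 1 = k)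
    (hmu : mu k' = mu k) (hblock : ∀ i : Fin r, k ≤ i → f i < q → lam i ≤ mu k) {i : Fin r}
    (hi : i ≠ k') : jtDefect r lam mu f q k i = 0 := by
  rcases lt_or_ge (i : ℕ) k with h | h
  · have hi' : (i : ℕ) + 1 < k := by
      have : (i : ℕ) ≠ k' := fun h' => hi (Fin.ext h'); omega
    have := (hmu_anti i k' (Fin.le_iff_val_le_val.2 (by omega))).trans (hmule i)
    exact binomTrans_flagDefect_of_one_lt (by omega)
  · by_cases hq : q ≤ f i
    · exact binomTrans_flagDefect_of_le hq
    · have := hblock i h (by omega)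
      exact binomTrans_flagDefect_of_add_nonpos (by omega) (by omega)

theorem det_updateCol_jtDefect_eq_zero (hlam_anti : ∀ i j : Fin r, i ≤ j → lam j ≤ lam i)
    (hmu_anti : ∀ i j : Fin r, i ≤ j → mu j ≤ mu i) (hmule : ∀ i, mu i ≤ lam i)
    {q : ℕ} {k k' : Fin r} (hk' : (k' : ℕ) + 1 = k) (hmu : mu k' = mu k)
    (hblock : ∀ i : Fin r, k ≤ i → f i < q → lam i ≤ mu k) :
    ((jtMatrix r lam mu f g).updateCol k (jtDefect r lam mu f q k)).det = 0 := by
  have hE := fun i => jtDefect_eq_zero_of_ne hmu_anti hmule hk' hmu hblock (i := i)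
  by_cases hk'e : lam k' = mu k'
  · refine Matrix.det_eq_zero_of_card_lt _ (rows := Finset.univ.filter fun t : Fin r => k ≤ t)
      (cols := Finset.univ.filter fun j : Fin r => k < j)
      (Finset.card_lt_card ((Finset.ssubset_iff_of_subset fun j => ?_).2 ⟨k, ?_⟩)) ?_
    · simp only [Finset.mem_filter, Finset.mem_univ, true_and]
      exact le_of_lt
    · simp
    · intro t ht j hj
      simp only [Finset.mem_filter, Finset.mem_univ, true_and, not_lt] at ht hj
      rcases eq_or_lt_of_le hj with rfl | hjk
      · rw [Matrix.updateCol_self]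
        exact hE t fun h => absurd (Fin.le_iff_val_le_val.1 (h ▸ ht)) (by omega)
      · rw [Matrix.updateCol_ne hjk.ne]
        refine jtMatrix_apply_eq_zero_of_le (by omega) ?_
        calc lam t ≤ lam k' := hlam_anti k' t (Fin.le_iff_val_le_val.2 (by omega))
          _ = mu k' := hk'e
          _ ≤ mu j := hmu_anti j k' (Fin.le_iff_val_le_val.2 (by omega))
  · refine Matrix.det_eq_zero_of_column_eq_zero k fun i => ?_
    rw [Matrix.updateCol_self]
    rcases eq_or_ne i k' with rfl | hi
    · exact binomTrans_flagDefect_of_one_lt (by have := hmule i; omega)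
    · exact hE i hi

end jtMatrix

theorem stmt16_general (r : ℕ) (lam mu f g : Fin r → ℕ)
    (hlam_anti : ∀ i j : Fin r, i ≤ j → lam j ≤ lam i)
    (hmu_anti : ∀ i j : Fin r, i ≤ j → mu j ≤ mu i) (hmule : ∀ i, mu i ≤ lam i)
    (hflag : ∀ (i : Fin r) (h : (i : ℕ) + 1 < r), mu i < lam ⟨(i : ℕ) + 1, h⟩ →
      g i ≤ g ⟨(i : ℕ) + 1, h⟩ ∧ f i ≤ f ⟨(i : ℕ) + 1, h⟩)
    (k : Fin r) (hk : 0 < (k : ℕ))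
    (hg : g ⟨(k : ℕ) - 1, Nat.lt_of_le_of_lt (Nat.sub_le _ _) k.isLt⟩ = g k)
    (hmu : mu ⟨(k : ℕ) - 1, Nat.lt_of_le_of_lt (Nat.sub_le _ _) k.isLt⟩ = mu k) :
    GtildeSkew r lam mu f g = GtildeSkew r lam mu f (Function.update g k (g k + 1)) := by
  rw [GtildeSkew_eq_det, GtildeSkew_eq_det]
  by_cases hwit : ∃ i : Fin r, k ≤ i ∧ f i < g k ∧ mu k < lam i
  · obtain ⟨i, hki, hfi, hmi⟩ := hwit
    have hG : g ≤ Function.update g k (g k + 1) := le_update_iff.2 ⟨by omega, fun _ _ => le_rfl⟩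
    rw [det_jtMatrix_eq_zero_of_lt hlam_anti hmu_anti hflag (fun _ => le_rfl) hki hfi hmi,
      det_jtMatrix_eq_zero_of_lt hlam_anti hmu_anti hflag hG hki hfi hmi]
  · simp only [not_exists, not_and, not_lt] at hwit
    have hk' : (k : ℕ) - 1 + 1 = k := by omega
    refine (isUnit_one_add_bR_mul_Xv (g k)).mul_left_cancel ?_
    rw [mul_det_jtMatrix_update hk' hg hmu,
      det_updateCol_jtDefect_eq_zero hlam_anti hmu_anti hmule hk' hmu hwit, add_zero]

theorem stmt16 (r : ℕ) (lam mu f g : Fin r → ℕ)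
    (hlam_anti : ∀ i j : Fin r, i ≤ j → lam j ≤ lam i) (hlam_pos : ∀ i, 0 < lam i)
    (hmu_anti : ∀ i j : Fin r, i ≤ j → mu j ≤ mu i) (hmule : ∀ i, mu i ≤ lam i)
    (hf_pos : ∀ i, 0 < f i) (hg_pos : ∀ i, 0 < g i)
    (hflag : ∀ (i : Fin r) (h : (i : ℕ) + 1 < r), mu i < lam ⟨(i : ℕ) + 1, h⟩ →
      g i ≤ g ⟨(i : ℕ) + 1, h⟩ ∧ f i ≤ f ⟨(i : ℕ) + 1, h⟩)
    (k : Fin r) (hk : 0 < (k : ℕ))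
    (hg : g ⟨(k : ℕ) - 1, Nat.lt_of_le_of_lt (Nat.sub_le _ _) k.isLt⟩ = g k)
    (hmu : mu ⟨(k : ℕ) - 1, Nat.lt_of_le_of_lt (Nat.sub_le _ _) k.isLt⟩ = mu k) :
    GtildeSkew r lam mu f g = GtildeSkew r lam mu f (Function.update g k (g k + 1)) :=
  stmt16_general r lam mu f g hlam_anti hmu_anti hmule hflag k hk hg hmu

end
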